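/- Let M_N be an N×N Hermitian matrix, Ψ(z) as above, and Θ(z) = Π̃_K (M_N − zI) Ψ(z) the n×n matrix polynomial of the remaining equations. Then λ ∈ ℂ is an eigenvalue of M_N if and only if det Θ(λ) = 0, and in that case every eigenvector φ of M_N with eigenvalue λ has the form φ = Ψ(λ)C for some nonzero C ∈ ℂ^n with Θ(λ)C = 0. -/

import Mathlib

open Matrix in
theorem eigenvalue_iff_det_Theta_eq_zero
    (N n : ℕ)
    (M : Matrix (Fin N) (Fin N) ℂ) (hM : M.IsHermitian)
    (κ : Fin n ↪ Fin N)
    (Ψ : ℂ → Matrix (Fin N) (Fin n) ℂ)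
    (hΨsol : ∀ z : ℂ, ∀ i : Fin N, i ∉ Set.range κ → ∀ c : Fin n,
      ((M - z • (1 : Matrix (Fin N) (Fin N) ℂ)) * Ψ z) i c = 0)
    (hform : ∀ z : ℂ, ∀ η : Fin N → ℂ,
      (∀ i : Fin N, i ∉ Set.range κ →
        ((M - z • (1 : Matrix (Fin N) (Fin N) ℂ)).mulVec η) i = 0) →
      ∃! Cv : Fin n → ℂ, η = (Ψ z).mulVec Cv)
    (Θ : ℂ → Matrix (Fin n) (Fin n) ℂ)
    (hΘ : ∀ z, Θ z = ((M - z • (1 : Matrix (Fin N) (Fin N) ℂ)) * Ψ z).submatrix κ id) :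
    ∀ l : ℂ,
      ((∃ φ : Fin N → ℂ, φ ≠ 0 ∧ M.mulVec φ = l • φ) ↔ (Θ l).det = 0) ∧
      (∀ φ : Fin N → ℂ, φ ≠ 0 → M.mulVec φ = l • φ →
        ∃ Cv : Fin n → ℂ, Cv ≠ 0 ∧ φ = (Ψ l).mulVec Cv ∧ (Θ l).mulVec Cv = 0) := by
  intro l
  set A := M - l • (1 : Matrix (Fin N) (Fin N) ℂ) with hA
  -- eigen equation reformulation
  have heig : ∀ φ : Fin N → ℂ, M.mulVec φ = l • φ ↔ A.mulVec φ = 0 := by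
    intro φ
    rw [hA, Matrix.sub_mulVec, Matrix.smul_mulVec, Matrix.one_mulVec, sub_eq_zero]
  -- Θ mulVec in terms of A * Ψ
  have hΘmul : ∀ Cv : Fin n → ℂ, ∀ j : Fin n,
      (Θ l).mulVec Cv j = A.mulVec ((Ψ l).mulVec Cv) (κ j) := by
    intro Cv j
    rw [hΘ, Matrix.mulVec_mulVec]
    simp [Matrix.mulVec, Matrix.submatrix, dotProduct]
    rfl
  -- zero vector uniqueness: Ψ l .mulVec Cv = 0 → Cv = 0
  have hinj : ∀ Cv : Fin n → ℂ, (Ψ l).mulVec Cv = 0 → Cv = 0 := by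
    intro Cv h
    have h0 : ∀ i : Fin N, i ∉ Set.range κ → A.mulVec (0 : Fin N → ℂ) i = 0 := by
      simp [Matrix.mulVec_zero]
    obtain ⟨C', _, huniq⟩ := hform l 0 h0
    have h1 := huniq Cv h.symm
    have h2 := huniq 0 (by simp [Matrix.mulVec_zero])
    rw [h1, h2]
  -- main eigenvector → (Cv data) implication
  have key : ∀ φ : Fin N → ℂ, φ ≠ 0 → M.mulVec φ = l • φ →
      ∃ Cv : Fin n → ℂ, Cv ≠ 0 ∧ φ = (Ψ l).mulVec Cv ∧ (Θ l).mulVec Cv = 0 := by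
    intro φ hφ hMφ
    have hAφ : A.mulVec φ = 0 := (heig φ).mp hMφ
    obtain ⟨Cv, hCv, _⟩ := hform l φ (fun i _ => by rw [hAφ]; rfl)
    refine ⟨Cv, ?_, hCv, ?_⟩
    · rintro rfl
      exact hφ (by simpa using hCv)
    · funext j
      rw [hΘmul Cv j, ← hCv, hAφ]
      rfl
  constructor
  · constructor
    · rintro ⟨φ, hφ, hMφ⟩
      obtain ⟨Cv, hCv0, _, hΘCv⟩ := key φ hφ hMφ
      exact Matrix.exists_mulVec_eq_zero_iff.mp ⟨Cv, hCv0, hΘCv⟩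
    · intro hdet
      obtain ⟨Cv, hCv0, hΘCv⟩ := Matrix.exists_mulVec_eq_zero_iff.mpr hdet
      refine ⟨(Ψ l).mulVec Cv, ?_, (heig _).mpr ?_⟩
      · intro h
        exact hCv0 (hinj Cv h)
      · funext i
        by_cases hi : i ∈ Set.range κ
        · obtain ⟨j, rfl⟩ := hi
          have := hΘmul Cv j
          rw [hΘCv] at this
          exact this.symm
        · rw [Matrix.mulVec_mulVec]
          show ((A * Ψ l).mulVec Cv) i = 0
          unfold Matrix.mulVec dotProduct
          exact Finset.sum_eq_zero fun c _ => mul_eq_zero_of_left (hΨsol l i hi c) _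
  · exact key
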